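/- Let F : Δ_A → [0,1]^K be monotone and L-Lipschitz, let τ > 0, and let π*_τ ∈ Δ_A be the unique solution of the τ-regularized variational inequality (F(π*_τ) − τπ*_τ)ᵀ(π*_τ − π) ≥ 0 for all π ∈ Δ_A. Let π¹, …, π^N ∈ Δ_A satisfy ‖π^i − π*_τ‖₂ ≤ δ for all i. Then for every player i, E^i_exp(π¹, …, π^N) ≤ 2τ + L(2√2 + 4)/N + 4L/√N + (√K + 4L√(2K)) δ. -/

import Mathlib

open scoped BigOperators
open MeasureTheory ProbabilityTheory Finset

noncomputable section

/-- The probability simplex over `Fin K`, inside Euclidean space (ℓ2 norm). -/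
def simplex (K : ℕ) : Set (EuclideanSpace ℝ (Fin K)) :=
  {x | (∀ a, 0 ≤ x a) ∧ ∑ a, x a = 1}

/-- Empirical occupancy measure `μ̂ = (1/N) ∑_j e_{a^j}` of an action profile. -/
def empDist (K N : ℕ) (v : Fin N → Fin K) : EuclideanSpace ℝ (Fin K) :=
  (N : ℝ)⁻¹ • ∑ j : Fin N, EuclideanSpace.single (v j) (1 : ℝ)

/-- Expected payoff `V^i(π¹,…,π^N) = E[F(μ̂)(a^i)]`, written as the finite sum over
action profiles weighted by the product of the independent mixed strategies. -/
def Vval (K N : ℕ) (F : EuclideanSpace ℝ (Fin K) → EuclideanSpace ℝ (Fin K))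
    (π : Fin N → EuclideanSpace ℝ (Fin K)) (i : Fin N) : ℝ :=
  ∑ v : Fin N → Fin K, (∏ j : Fin N, π j (v j)) * F (empDist K N v) (v i)

/-- Exploitability `E^i_exp(π¹,…,π^N) = sup_{π′∈Δ} V^i(π′,π^{−i}) − V^i(π¹,…,π^N)`. -/
def expl (K N : ℕ) (F : EuclideanSpace ℝ (Fin K) → EuclideanSpace ℝ (Fin K))
    (π : Fin N → EuclideanSpace ℝ (Fin K)) (i : Fin N) : ℝ :=
  (⨆ p : simplex K, Vval K N F (Function.update π i (p : EuclideanSpace ℝ (Fin K))) i)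
    - Vval K N F π i

/-! Against players who all stay within `δ` of `π*_τ`, the empirical distribution `μ̂` is close to
`π*_τ` whichever mixed strategy player `i` uses: its mean `(1/N) ∑ⱼ σʲ` is within `δ + √2/N` of
`π*_τ`, and since the indicator vectors `e_{aʲ} - σʲ` are independent with mean zero, the second
moment of `μ̂ - mean` is at most `2/N`. By the Lipschitz bound, every payoff `V^i(π', π^{-i})` is
then within `L(√2/√N + δ + √2/N)` of the linear payoff `⟨π', F(π*_τ)⟩`. The regularized
variational inequality lets no `π'` gain more than `τ` over `π*_τ` in this linear payoff, and
Cauchy–Schwarz costs `π^i` at most `√K δ` against `π*_τ`. -/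
section EuclideanCoordinates

variable {n : Type*} [Fintype n]

lemma sum_mul_eq_inner (x y : EuclideanSpace ℝ n) : ∑ a, x a * y a = inner ℝ x y := by
  simp [PiLp.inner_apply, mul_comm]

lemma norm_le_sqrt_card_of_norm_apply_le_one {y : EuclideanSpace ℝ n} (hy : ∀ a, ‖y a‖ ≤ 1) :
    ‖y‖ ≤ √(Fintype.card n) := by
  rw [EuclideanSpace.norm_eq]
  refine Real.sqrt_le_sqrt ?_
  calc ∑ a, ‖y a‖ ^ 2 ≤ ∑ _a : n, (1 : ℝ) :=
        sum_le_sum fun a _ => pow_le_one₀ (norm_nonneg _) (hy a)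
    _ = Fintype.card n := by simp

end EuclideanCoordinates

section Simplex

variable {K : ℕ} {x y : EuclideanSpace ℝ (Fin K)}

lemma apply_le_one_of_mem_simplex (hx : x ∈ simplex K) (a : Fin K) : x a ≤ 1 :=
  hx.2 ▸ single_le_sum (fun b _ => hx.1 b) (mem_univ a)

lemma norm_sq_le_one_of_mem_simplex (hx : x ∈ simplex K) : ‖x‖ ^ 2 ≤ 1 := by
  rw [EuclideanSpace.real_norm_sq_eq, ← hx.2]
  exact sum_le_sum fun a _ => by nlinarith [hx.1 a, apply_le_one_of_mem_simplex hx a]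

lemma norm_sub_sq_le_two_of_mem_simplex (hx : x ∈ simplex K) (hy : y ∈ simplex K) :
    ‖x - y‖ ^ 2 ≤ 2 := by
  have hxy : 0 ≤ inner ℝ x y := by
    rw [← sum_mul_eq_inner]
    exact sum_nonneg fun a _ => mul_nonneg (hx.1 a) (hy.1 a)
  rw [norm_sub_sq_real]
  linarith [norm_sq_le_one_of_mem_simplex hx, norm_sq_le_one_of_mem_simplex hy]

lemma norm_sub_le_sqrt_two_of_mem_simplex (hx : x ∈ simplex K) (hy : y ∈ simplex K) :
    ‖x - y‖ ≤ √2 :=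
  Real.le_sqrt_of_sq_le (norm_sub_sq_le_two_of_mem_simplex hx hy)

lemma single_mem_simplex (a : Fin K) : EuclideanSpace.single a (1 : ℝ) ∈ simplex K :=
  ⟨fun b => by by_cases h : b = a <;> simp [h], by simp⟩

lemma empDist_mem_simplex {N : ℕ} (hN : 0 < N) (v : Fin N → Fin K) :
    empDist K N v ∈ simplex K := by
  have hcoord : ∀ a, empDist K N v a = (N : ℝ)⁻¹ * ∑ j, if a = v j then 1 else 0 := fun a => by
    simp [empDist, Pi.single_apply]
  refine ⟨fun a => by rw [hcoord]; positivity, ?_⟩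
  simp_rw [hcoord, ← mul_sum]
  rw [sum_comm]
  simp [hN.ne']

end Simplex

section ProductWeights

lemma sum_mul_le_sqrt_sum_mul_sq {ι : Type*} (s : Finset ι) {w f : ι → ℝ}
    (hw : ∀ j ∈ s, 0 ≤ w j) (hw1 : ∑ j ∈ s, w j = 1) :
    ∑ j ∈ s, w j * f j ≤ √(∑ j ∈ s, w j * f j ^ 2) := by
  refine (le_abs_self _).trans (Real.abs_le_sqrt ?_)
  simpa using (Even.convexOn_pow (n := 2) even_two).map_sum_le hw hw1 (p := f) (by simp)

variable {ι α : Type*} [Fintype ι] [DecidableEq ι] [Fintype α]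

lemma sum_prod_mul_prod (σ g : ι → α → ℝ) :
    ∑ v : ι → α, (∏ j, σ j (v j)) * ∏ j, g j (v j) = ∏ j, ∑ a, σ j a * g j a := by
  rw [Fintype.prod_sum]
  simp_rw [← prod_mul_distrib]

variable {σ : ι → α → ℝ}

lemma sum_prod_eq_one (hσ : ∀ j, ∑ a, σ j a = 1) : ∑ v : ι → α, ∏ j, σ j (v j) = 1 := by
  rw [← Fintype.prod_sum]
  simp [hσ]

lemma sum_prod_mul_apply (hσ : ∀ j, ∑ a, σ j a = 1) (i : ι) (g : α → ℝ) :
    ∑ v : ι → α, (∏ j, σ j (v j)) * g (v i) = ∑ a, σ i a * g a := by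
  have h := sum_prod_mul_prod σ (Function.update (fun _ _ => 1) i g)
  rw [Fintype.prod_eq_single i fun j hj => by simp [hj, hσ], Function.update_self] at h
  rw [← h]
  refine sum_congr rfl fun v _ => congrArg _ ?_
  rw [Fintype.prod_eq_single i fun j hj => by simp [hj], Function.update_self]

lemma sum_prod_mul_apply_mul_apply (hσ : ∀ j, ∑ a, σ j a = 1) {j k : ι} (hjk : j ≠ k)
    (g h : α → ℝ) :
    ∑ v : ι → α, (∏ m, σ m (v m)) * (g (v j) * h (v k))
      = (∑ a, σ j a * g a) * ∑ a, σ k a * h a := by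
  have H := sum_prod_mul_prod σ (Function.update (Function.update (fun _ _ => 1) j g) k h)
  rw [Fintype.prod_eq_mul j k hjk fun m hm => by simp [hm.1, hm.2, hσ],
    Function.update_of_ne hjk, Function.update_self, Function.update_self] at H
  rw [← H]
  refine sum_congr rfl fun v _ => congrArg _ ?_
  rw [Fintype.prod_eq_mul j k hjk fun m hm => by simp [hm.1, hm.2],
    Function.update_of_ne hjk, Function.update_self, Function.update_self]

end ProductWeights

section EmpiricalDistribution

variable {K : ℕ}

lemma sum_mul_single_sub_apply {x : EuclideanSpace ℝ (Fin K)} (hx : x ∈ simplex K) (a : Fin K) :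
    ∑ b, x b * (EuclideanSpace.single b (1 : ℝ) - x) a = 0 := by
  simp [mul_sub, sum_sub_distrib, ← sum_mul, hx.2]

variable {ι : Type*} [Fintype ι] [DecidableEq ι] {σ : ι → EuclideanSpace ℝ (Fin K)}

lemma sum_prod_mul_inner_single_sub_eq_zero (hσ : ∀ j, σ j ∈ simplex K) {j k : ι}
    (hjk : j ≠ k) :
    ∑ v : ι → Fin K, (∏ m, σ m (v m)) *
      inner ℝ (EuclideanSpace.single (v j) (1 : ℝ) - σ j)
        (EuclideanSpace.single (v k) (1 : ℝ) - σ k) = 0 := by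
  simp_rw [← sum_mul_eq_inner, mul_sum]
  rw [sum_comm]
  refine sum_eq_zero fun a _ => ?_
  rw [sum_prod_mul_apply_mul_apply (fun m => (hσ m).2) hjk
    (fun b => (EuclideanSpace.single b (1 : ℝ) - σ j) a)
    (fun b => (EuclideanSpace.single b (1 : ℝ) - σ k) a), sum_mul_single_sub_apply (hσ j), zero_mul]

lemma sum_prod_mul_norm_single_sub_sq_le (hσ : ∀ j, σ j ∈ simplex K) (j : ι) :
    ∑ v : ι → Fin K, (∏ m, σ m (v m)) * ‖EuclideanSpace.single (v j) (1 : ℝ) - σ j‖ ^ 2 ≤ 2 := by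
  rw [sum_prod_mul_apply (fun m => (hσ m).2) j
    (fun b => ‖EuclideanSpace.single b (1 : ℝ) - σ j‖ ^ 2)]
  calc ∑ b, σ j b * ‖EuclideanSpace.single b (1 : ℝ) - σ j‖ ^ 2 ≤ ∑ b, σ j b * 2 :=
        sum_le_sum fun b _ => mul_le_mul_of_nonneg_left
          (norm_sub_sq_le_two_of_mem_simplex (single_mem_simplex b) (hσ j)) ((hσ j).1 b)
    _ = 2 := by rw [← sum_mul, (hσ j).2, one_mul]

lemma sum_prod_mul_norm_sum_single_sub_sq_le (hσ : ∀ j, σ j ∈ simplex K) :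
    ∑ v : ι → Fin K, (∏ m, σ m (v m)) *
      ‖∑ j, (EuclideanSpace.single (v j) (1 : ℝ) - σ j)‖ ^ 2 ≤ 2 * Fintype.card ι := by
  simp_rw [← real_inner_self_eq_norm_sq, sum_inner, inner_sum, mul_sum]
  rw [sum_comm]
  calc ∑ j, ∑ v : ι → Fin K, ∑ k, (∏ m, σ m (v m)) *
        inner ℝ (EuclideanSpace.single (v j) (1 : ℝ) - σ j)
          (EuclideanSpace.single (v k) (1 : ℝ) - σ k)
      = ∑ j, ∑ v : ι → Fin K, (∏ m, σ m (v m)) *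
          ‖EuclideanSpace.single (v j) (1 : ℝ) - σ j‖ ^ 2 := by
        refine sum_congr rfl fun j _ => ?_
        rw [sum_comm, sum_eq_single j (fun k _ hkj => sum_prod_mul_inner_single_sub_eq_zero hσ
          hkj.symm) (by simp)]
        simp_rw [real_inner_self_eq_norm_sq]
    _ ≤ ∑ _j : ι, (2 : ℝ) := sum_le_sum fun j _ => sum_prod_mul_norm_single_sub_sq_le hσ j
    _ = 2 * Fintype.card ι := by simp [mul_comm]

lemma empDist_sub_inv_smul_sum {N : ℕ} (σ : Fin N → EuclideanSpace ℝ (Fin K)) (v : Fin N → Fin K) :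
    empDist K N v - (N : ℝ)⁻¹ • ∑ j, σ j
      = (N : ℝ)⁻¹ • ∑ j, (EuclideanSpace.single (v j) (1 : ℝ) - σ j) := by
  rw [empDist, ← smul_sub, ← sum_sub_distrib]

lemma sum_prod_mul_norm_empDist_sub_le {N : ℕ} {σ : Fin N → EuclideanSpace ℝ (Fin K)}
    (hσ : ∀ j, σ j ∈ simplex K) :
    ∑ v : Fin N → Fin K, (∏ j, σ j (v j)) * ‖empDist K N v - (N : ℝ)⁻¹ • ∑ j, σ j‖
      ≤ √2 / √N := by
  have hw : ∀ v : Fin N → Fin K, 0 ≤ ∏ j, σ j (v j) := fun v => prod_nonneg fun j _ => (hσ j).1 _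
  calc _ ≤ √(∑ v : Fin N → Fin K, (∏ j, σ j (v j)) * ‖empDist K N v - (N : ℝ)⁻¹ • ∑ j, σ j‖ ^ 2) :=
        sum_mul_le_sqrt_sum_mul_sq _ (fun v _ => hw v) (sum_prod_eq_one fun j => (hσ j).2)
    _ ≤ √(2 / N) := by
        refine Real.sqrt_le_sqrt ?_
        simp_rw [empDist_sub_inv_smul_sum, norm_smul, mul_pow, mul_left_comm _ (‖(N : ℝ)⁻¹‖ ^ 2),
          ← mul_sum]
        have hvar := sum_prod_mul_norm_sum_single_sub_sq_le hσ
        rw [Fintype.card_fin] at hvar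
        calc _ ≤ ‖(N : ℝ)⁻¹‖ ^ 2 * (2 * N) := by gcongr
          _ = 2 / N := by
            rcases eq_or_ne (N : ℝ) 0 with h | h
            · simp [h]
            · rw [norm_inv, Real.norm_natCast]
              field_simp
    _ = √2 / √N := Real.sqrt_div' _ (Nat.cast_nonneg N)

end EmpiricalDistribution

section Averages

variable {E ι : Type*} [NormedAddCommGroup E] [NormedSpace ℝ E] [Fintype ι]

lemma norm_inv_card_smul_sum_sub_le (σ : ι → E) (x : E) {i : ι} {D δ : ℝ} (hδ : 0 ≤ δ)
    (hi : ‖σ i - x‖ ≤ D) (hfar : ∀ j, j ≠ i → ‖σ j - x‖ ≤ δ) :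
    ‖(Fintype.card ι : ℝ)⁻¹ • ∑ j, σ j - x‖ ≤ δ + D / Fintype.card ι := by
  classical
  have hc : (Fintype.card ι : ℝ) ≠ 0 := by
    have : 0 < Fintype.card ι := Fintype.card_pos_iff.2 ⟨i⟩
    positivity
  have hmean : (Fintype.card ι : ℝ)⁻¹ • ∑ j, σ j - x = (Fintype.card ι : ℝ)⁻¹ • ∑ j, (σ j - x) := by
    rw [sum_sub_distrib, sum_const, card_univ, smul_sub, ← Nat.cast_smul_eq_nsmul ℝ,
      inv_smul_smul₀ hc]
  have hterm : ∀ j, ‖σ j - x‖ ≤ δ + if j = i then D else 0 := by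
    intro j
    by_cases hj : j = i
    · subst hj; simpa using hi.trans (le_add_of_nonneg_left hδ)
    · simpa [hj] using hfar j hj
  rw [hmean, norm_smul, norm_inv, Real.norm_natCast]
  calc (Fintype.card ι : ℝ)⁻¹ * ‖∑ j, (σ j - x)‖
      ≤ (Fintype.card ι : ℝ)⁻¹ * ∑ j, (δ + if j = i then D else 0) := by
        gcongr
        exact (norm_sum_le _ _).trans (sum_le_sum fun j _ => hterm j)
    _ = δ + D / Fintype.card ι := by
        rw [sum_add_distrib, sum_const, card_univ, nsmul_eq_mul, Fintype.sum_ite_eq']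
        field_simp

end Averages

section Payoffs

variable {K N : ℕ} {L δ : ℝ} {F : EuclideanSpace ℝ (Fin K) → EuclideanSpace ℝ (Fin K)}
  {πτ : EuclideanSpace ℝ (Fin K)}

lemma abs_Vval_sub_sum_mul_le (hL : 0 ≤ L) (hδ : 0 ≤ δ)
    (hFlip : ∀ μ ∈ simplex K, ∀ μ' ∈ simplex K, ‖F μ - F μ'‖ ≤ L * ‖μ - μ'‖)
    (hπτ : πτ ∈ simplex K) {σ : Fin N → EuclideanSpace ℝ (Fin K)} (hσ : ∀ j, σ j ∈ simplex K)
    {i : Fin N} (hfar : ∀ j, j ≠ i → ‖σ j - πτ‖ ≤ δ) :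
    |Vval K N F σ i - ∑ a, σ i a * F πτ a| ≤ L * (√2 / √N + (δ + √2 / N)) := by
  set m := (N : ℝ)⁻¹ • ∑ j, σ j
  have hw : ∀ v : Fin N → Fin K, 0 ≤ ∏ j, σ j (v j) := fun v => prod_nonneg fun j _ => (hσ j).1 _
  have hsplit : Vval K N F σ i - ∑ a, σ i a * F πτ a
      = ∑ v : Fin N → Fin K, (∏ j, σ j (v j)) * (F (empDist K N v) - F πτ) (v i) := by
    rw [← sum_prod_mul_apply (fun j => (hσ j).2) i (fun a => F πτ a), Vval, ← sum_sub_distrib]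
    simp [mul_sub]
  have hterm : ∀ v : Fin N → Fin K,
      |(F (empDist K N v) - F πτ) (v i)| ≤ L * (‖empDist K N v - m‖ + ‖m - πτ‖) := fun v =>
    (PiLp.norm_apply_le _ _).trans <| (hFlip _ (empDist_mem_simplex i.pos v) _ hπτ).trans <|
      mul_le_mul_of_nonneg_left (norm_sub_le_norm_sub_add_norm_sub _ _ _) hL
  have hmean : ‖m - πτ‖ ≤ δ + √2 / N := by
    simpa using norm_inv_card_smul_sum_sub_le σ πτ hδ
      (norm_sub_le_sqrt_two_of_mem_simplex (hσ i) hπτ) hfar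
  rw [hsplit]
  calc _ ≤ ∑ v : Fin N → Fin K, (∏ j, σ j (v j)) * (L * (‖empDist K N v - m‖ + ‖m - πτ‖)) := by
        refine (abs_sum_le_sum_abs _ _).trans (sum_le_sum fun v _ => ?_)
        rw [abs_mul, abs_of_nonneg (hw v)]
        exact mul_le_mul_of_nonneg_left (hterm v) (hw v)
    _ = L * (∑ v : Fin N → Fin K, (∏ j, σ j (v j)) * ‖empDist K N v - m‖
          + (∑ v : Fin N → Fin K, ∏ j, σ j (v j)) * ‖m - πτ‖) := by
        rw [sum_mul, ← sum_add_distrib, mul_sum]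
        exact sum_congr rfl fun v _ => by ring
    _ ≤ L * (√2 / √N + (δ + √2 / N)) := by
        rw [sum_prod_eq_one fun j => (hσ j).2, one_mul]
        gcongr
        exact sum_prod_mul_norm_empDist_sub_le hσ

end Payoffs

section RegularizedEquilibrium

variable {K : ℕ}

lemma sum_mul_le_of_regularized_vi {x y p : EuclideanSpace ℝ (Fin K)} {τ : ℝ} (hτ : 0 ≤ τ)
    (hx : x ∈ simplex K) (hp : p ∈ simplex K)
    (hvi : 0 ≤ ∑ a, (y a - τ * x a) * (x a - p a)) :
    ∑ a, p a * y a ≤ ∑ a, x a * y a + τ := by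
  have hexpand : ∑ a, (y a - τ * x a) * (x a - p a)
      = (∑ a, x a * y a - ∑ a, p a * y a) - τ * (∑ a, x a * x a - ∑ a, x a * p a) := by
    rw [← sum_sub_distrib, ← sum_sub_distrib, mul_sum, ← sum_sub_distrib]
    exact sum_congr rfl fun a _ => by ring
  have hxx : 0 ≤ ∑ a, x a * x a := sum_nonneg fun a _ => mul_self_nonneg _
  have hxp : ∑ a, x a * p a ≤ 1 := hp.2 ▸ sum_le_sum fun a _ =>
    mul_le_of_le_one_left (hp.1 a) (apply_le_one_of_mem_simplex hx a)
  nlinarith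

lemma sum_mul_sub_sum_mul_le {n : Type*} [Fintype n] {x q y : EuclideanSpace ℝ n} {δ : ℝ}
    (hq : ‖q - x‖ ≤ δ) (hy : ∀ a, ‖y a‖ ≤ 1) :
    ∑ a, x a * y a - ∑ a, q a * y a ≤ √(Fintype.card n) * δ := by
  have hinner : ∑ a, x a * y a - ∑ a, q a * y a = inner ℝ (x - q) y := by
    rw [← sum_mul_eq_inner, ← sum_sub_distrib]
    exact sum_congr rfl fun a _ => by simp [sub_mul]
  have hxq : ‖x - q‖ ≤ δ := norm_sub_rev x q ▸ hq
  rw [hinner]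
  calc inner ℝ (x - q) y ≤ ‖x - q‖ * ‖y‖ := real_inner_le_norm _ _
    _ ≤ δ * √(Fintype.card n) :=
        mul_le_mul hxq (norm_le_sqrt_card_of_norm_apply_le_one hy) (norm_nonneg _)
          ((norm_nonneg _).trans hq)
    _ = √(Fintype.card n) * δ := mul_comm _ _

theorem expl_le_of_norm_sub_le {N : ℕ} (hK : 0 < K) {L τ δ : ℝ} (hL : 0 ≤ L) (hτ : 0 ≤ τ)
    (hδ : 0 ≤ δ) {F : EuclideanSpace ℝ (Fin K) → EuclideanSpace ℝ (Fin K)}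
    {πτ : EuclideanSpace ℝ (Fin K)} (hFπτ : ∀ a, ‖F πτ a‖ ≤ 1)
    (hFlip : ∀ μ ∈ simplex K, ∀ μ' ∈ simplex K, ‖F μ - F μ'‖ ≤ L * ‖μ - μ'‖)
    (hπτ : πτ ∈ simplex K)
    (hRVI : ∀ p ∈ simplex K, 0 ≤ ∑ a : Fin K, (F πτ a - τ * πτ a) * (πτ a - p a))
    {π : Fin N → EuclideanSpace ℝ (Fin K)} (hπ : ∀ i, π i ∈ simplex K)
    (hclose : ∀ i, ‖π i - πτ‖ ≤ δ) (i : Fin N) :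
    expl K N F π i ≤ τ + √K * δ + 2 * (L * (√2 / √N + (δ + √2 / N))) := by
  have : Nonempty (simplex K) := ⟨⟨_, single_mem_simplex ⟨0, hK⟩⟩⟩
  have hdev : ∀ p : simplex K, Vval K N F (Function.update π i p) i
      ≤ ∑ a, π i a * F πτ a + (τ + √K * δ) + L * (√2 / √N + (δ + √2 / N)) := by
    intro p
    have hσ : ∀ j, Function.update π i p j ∈ simplex K :=
      (Function.forall_update_iff π fun _ x => x ∈ simplex K).2 ⟨p.2, fun j _ => hπ j⟩
    have hfar : ∀ j, j ≠ i → ‖Function.update π i p j - πτ‖ ≤ δ := fun j hj => by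
      simpa [hj] using hclose j
    have happrox := abs_Vval_sub_sum_mul_le hL hδ hFlip hπτ hσ hfar
    rw [Function.update_self] at happrox
    have hgain := sum_mul_le_of_regularized_vi hτ hπτ p.2 (hRVI p p.2)
    have hdrift := sum_mul_sub_sum_mul_le (hclose i) hFπτ
    rw [Fintype.card_fin] at hdrift
    linarith [(abs_le.1 happrox).2]
  have hown := abs_Vval_sub_sum_mul_le (i := i) hL hδ hFlip hπτ hπ fun j _ => hclose j
  rw [expl]
  linarith [ciSup_le hdev, (abs_le.1 hown).1]

end RegularizedEquilibrium

theorem stmt6_general (K N : ℕ) (hK : 0 < K) (L τ δ : ℝ)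
    (hL : 0 ≤ L) (hτ : 0 < τ) (hδ : 0 ≤ δ)
    (F : EuclideanSpace ℝ (Fin K) → EuclideanSpace ℝ (Fin K))
    (hFmap : ∀ μ ∈ simplex K, ∀ a : Fin K, F μ a ∈ Set.Icc (0 : ℝ) 1)
    (hFlip : ∀ μ ∈ simplex K, ∀ μ' ∈ simplex K, ‖F μ - F μ'‖ ≤ L * ‖μ - μ'‖)
    (πτ : EuclideanSpace ℝ (Fin K)) (hπτ : πτ ∈ simplex K)
    (hRVI : ∀ p ∈ simplex K, 0 ≤ ∑ a : Fin K, (F πτ a - τ * πτ a) * (πτ a - p a))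
    (π : Fin N → EuclideanSpace ℝ (Fin K)) (hπ : ∀ i, π i ∈ simplex K)
    (hclose : ∀ i, ‖π i - πτ‖ ≤ δ) :
    ∀ i : Fin N, expl K N F π i
        ≤ 2 * τ + L * (2 * Real.sqrt 2 + 4) / N + 4 * L / Real.sqrt N
          + (Real.sqrt K + 4 * L * Real.sqrt (2 * K)) * δ := by
  intro i
  have hFπτ : ∀ a, ‖F πτ a‖ ≤ 1 := fun a => by
    rw [Real.norm_eq_abs, abs_le]
    exact ⟨by linarith [(hFmap πτ hπτ a).1], (hFmap πτ hπτ a).2⟩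
  refine (expl_le_of_norm_sub_le hK hL hτ.le hδ hFπτ hFlip hπτ hRVI hπ hclose i).trans ?_
  have hs2 : √2 ≤ 2 := Real.sqrt_le_iff.2 ⟨by norm_num, by norm_num⟩
  have hK' : (1 : ℝ) ≤ K := by exact_mod_cast hK
  have hs2K : 1 ≤ √(2 * K) := Real.one_le_sqrt.2 (by linarith)
  have h1 : 2 * (L * (√2 / √N)) ≤ 4 * L / √N := by
    rw [← mul_div_assoc, ← mul_div_assoc]
    exact div_le_div_of_nonneg_right (by nlinarith) (Real.sqrt_nonneg _)
  have h2 : 2 * (L * (√2 / N)) ≤ L * (2 * √2 + 4) / N := by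
    rw [← mul_div_assoc, ← mul_div_assoc]
    exact div_le_div_of_nonneg_right (by nlinarith) (Nat.cast_nonneg _)
  have h3 : 2 * (L * δ) ≤ 4 * L * √(2 * K) * δ := by
    nlinarith [mul_nonneg hL hδ]
  linarith

/-- Theorem 2 of the paper, with explicit constants.
Let `F : Δ_A → [0,1]^K` be monotone and `L`-Lipschitz, `τ > 0`, and `π*_τ` a solution of the
`τ`-regularized variational inequality. If `π¹,…,π^N ∈ Δ_A` satisfy `‖π^i − π*_τ‖₂ ≤ δ` for
all `i`, then for every player `i`,
`E^i_exp(π¹,…,π^N) ≤ 2τ + L(2√2+4)/N + 4L/√N + (√K + 4L√(2K))δ`. -/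
theorem stmt6 (K N : ℕ) (hK : 0 < K) (hN : 0 < N) (L τ δ : ℝ)
    (hL : 0 ≤ L) (hτ : 0 < τ) (hδ : 0 ≤ δ)
    (F : EuclideanSpace ℝ (Fin K) → EuclideanSpace ℝ (Fin K))
    (hFmap : ∀ μ ∈ simplex K, ∀ a : Fin K, F μ a ∈ Set.Icc (0 : ℝ) 1)
    (hFmono : ∀ μ₁ ∈ simplex K, ∀ μ₂ ∈ simplex K,
      ∑ a : Fin K, (F μ₁ a - F μ₂ a) * (μ₁ a - μ₂ a) ≤ 0)
    (hFlip : ∀ μ ∈ simplex K, ∀ μ' ∈ simplex K, ‖F μ - F μ'‖ ≤ L * ‖μ - μ'‖)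
    (πτ : EuclideanSpace ℝ (Fin K)) (hπτ : πτ ∈ simplex K)
    (hRVI : ∀ p ∈ simplex K, 0 ≤ ∑ a : Fin K, (F πτ a - τ * πτ a) * (πτ a - p a))
    (π : Fin N → EuclideanSpace ℝ (Fin K)) (hπ : ∀ i, π i ∈ simplex K)
    (hclose : ∀ i, ‖π i - πτ‖ ≤ δ) :
    ∀ i : Fin N, expl K N F π i
        ≤ 2 * τ + L * (2 * Real.sqrt 2 + 4) / N + 4 * L / Real.sqrt N
          + (Real.sqrt K + 4 * L * Real.sqrt (2 * K)) * δ :=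
  stmt6_general K N hK L τ δ hL hτ hδ F hFmap hFlip πτ hπτ hRVI π hπ hclose
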